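/- Let A be a real n×m matrix of rank r and let k < r. Consider minimizing G(P,Q) = ‖A − PQᵀ‖² over P ∈ ℝ^{n×k} and Q ∈ ℝ^{m×k} of rank k subject to QᵀQ = I_k. Then the choice Q = V_{(1:k)} (the first k right singular vectors of A) and P = U_{(1:k)}·diag(σ₁,…,σ_k) attains the minimum; i.e., for every P' ∈ ℝ^{n×k}, Q' ∈ ℝ^{m×k} with Q'ᵀQ' = I_k one has ‖A − PQᵀ‖ ≤ ‖A − P'Q'ᵀ‖, and PQᵀ = Σ_{i=1}^k σ_i U_i V_iᵀ. -/

import Mathlib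

/-!
Because `QᵀQ = 1`, the squared error splits as `‖X - PQᵀ‖² = ‖X‖² - ‖XQ‖² + ‖XQ - P‖²`, so the
problem is to maximise `‖AQ‖²` over matrices with orthonormal columns (Ky Fan). With `W = VᵀQ`,
`‖AQ‖² = ∑ₗ σₗ² cₗ` where the squared row norms `cₗ` of `W` lie in `[0, 1]` and sum to `k`; for
decreasing weights `σₗ²` such a sum is at most `∑_{l<k} σₗ²`. The choice `Q = V_{(1:k)}` attains
this bound and has `AQ = P`, so the last term of the splitting vanishes.
-/

open Matrix BigOperators

noncomputable def frobSq {n m : ℕ} (X : Matrix (Fin n) (Fin m) ℝ) : ℝ :=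
  ∑ i, ∑ j, (X i j) ^ 2

noncomputable def frobNorm {n m : ℕ} (X : Matrix (Fin n) (Fin m) ℝ) : ℝ :=
  Real.sqrt (frobSq X)

def rectDiag (n m : ℕ) (σ : ℕ → ℝ) : Matrix (Fin n) (Fin m) ℝ :=
  of fun i j => if (i : ℕ) = j then σ i else 0

section

variable {n m k : ℕ}

lemma sum_mul_le_sum_range_of_antitone {w : ℕ → ℝ} (hw : Antitone w) (hwk : 0 ≤ w k)
    {c : Fin m → ℝ} (hc0 : ∀ l, 0 ≤ c l) (hc1 : ∀ l, c l ≤ 1) (hc : ∑ l, c l ≤ k) :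
    ∑ l : Fin m, w l * c l ≤ ∑ i ∈ Finset.range k, w i := by
  have hterm : ∀ l : Fin m, (w l - w k) * c l ≤ if (l : ℕ) < k then w l - w k else 0 := by
    intro l
    split_ifs with h
    · nlinarith [hw h.le, hc1 l]
    · nlinarith [hw (not_lt.1 h), hc0 l]
  have htrunc : ∑ l : Fin m, (if (l : ℕ) < k then w l - w k else 0)
      ≤ ∑ i ∈ Finset.range k, (w i - w k) := by
    rw [Fin.sum_univ_eq_sum_range (fun i => if i < k then w i - w k else 0), ← Finset.sum_filter]
    refine Finset.sum_le_sum_of_subset_of_nonneg (fun i hi => ?_) fun i hi _ => ?_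
    · simp only [Finset.mem_filter, Finset.mem_range] at hi ⊢
      exact hi.2
    · exact sub_nonneg.2 (hw (Finset.mem_range.1 hi).le)
  calc ∑ l : Fin m, w l * c l = ∑ l : Fin m, (w l - w k) * c l + w k * ∑ l : Fin m, c l := by
        rw [Finset.mul_sum, ← Finset.sum_add_distrib]
        exact Finset.sum_congr rfl fun l _ => by ring
    _ ≤ ∑ i ∈ Finset.range k, (w i - w k) + w k * k :=
        add_le_add ((Finset.sum_le_sum fun l _ => hterm l).trans htrunc)
          (mul_le_mul_of_nonneg_left hc hwk)
    _ = ∑ i ∈ Finset.range k, w i := by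
        rw [Finset.sum_sub_distrib, Finset.sum_const, Finset.card_range, nsmul_eq_mul]
        ring

lemma transpose_mul_self_submatrix_eq_one {p : ℕ} {W : Matrix (Fin m) (Fin p) ℝ}
    (hW : Wᵀ * W = 1) {f : Fin k → Fin p} (hf : Function.Injective f) :
    (W.submatrix id f)ᵀ * W.submatrix id f = 1 := by
  rw [transpose_submatrix, ← submatrix_mul _ _ _ _ _ Function.bijective_id, hW, submatrix_one _ hf]

lemma transpose_mul_self_mul_eq_one {W : Matrix (Fin n) (Fin m) ℝ} (hW : Wᵀ * W = 1)
    {Q : Matrix (Fin m) (Fin k) ℝ} (hQ : Qᵀ * Q = 1) : (W * Q)ᵀ * (W * Q) = 1 := by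
  rw [transpose_mul, Matrix.mul_assoc, ← Matrix.mul_assoc Wᵀ, hW, Matrix.one_mul, hQ]

lemma frobSq_nonneg (X : Matrix (Fin n) (Fin m) ℝ) : 0 ≤ frobSq X := by
  unfold frobSq
  positivity

lemma frobSq_eq_trace (X : Matrix (Fin n) (Fin m) ℝ) : frobSq X = trace (X * Xᵀ) := by
  simp [frobSq, trace, mul_apply, sq]

lemma frobSq_diagonal (d : Fin n → ℝ) : frobSq (diagonal d) = ∑ i, d i ^ 2 := by
  simp [frobSq, diagonal_apply, ite_pow]

lemma frobSq_mul_left {p : ℕ} {W : Matrix (Fin p) (Fin n) ℝ} (hW : Wᵀ * W = 1)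
    (X : Matrix (Fin n) (Fin m) ℝ) : frobSq (W * X) = frobSq X := by
  rw [frobSq_eq_trace, frobSq_eq_trace, transpose_mul, Matrix.mul_assoc, trace_mul_comm,
    Matrix.mul_assoc, Matrix.mul_assoc Xᵀ, hW, Matrix.mul_one]

lemma frobSq_of_transpose_mul_self_eq_one {W : Matrix (Fin m) (Fin k) ℝ} (hW : Wᵀ * W = 1) :
    frobSq W = k := by
  rw [frobSq_eq_trace, trace_mul_comm, hW, trace_one, Fintype.card_fin]

lemma sum_sq_row_le_one {W : Matrix (Fin m) (Fin k) ℝ} (hW : Wᵀ * W = 1) (l : Fin m) :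
    ∑ j, W l j ^ 2 ≤ 1 := by
  set M := W * Wᵀ with hM
  have hdiag : M l l = ∑ j, W l j ^ 2 := by simp [hM, mul_apply, sq]
  have hidem : M * M = M := by
    rw [hM, Matrix.mul_assoc, ← Matrix.mul_assoc Wᵀ, hW, Matrix.one_mul]
  have hsymm : Mᵀ = M := by rw [hM, transpose_mul, transpose_transpose]
  have hsq : M l l ^ 2 ≤ M l l :=
    calc M l l ^ 2 ≤ ∑ p, M l p ^ 2 :=
          Finset.single_le_sum (f := fun p => M l p ^ 2) (fun _ _ => sq_nonneg _)
            (Finset.mem_univ l)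
      _ = M l l := by
          conv_rhs => rw [← hidem, mul_apply]
          refine Finset.sum_congr rfl fun p _ => ?_
          rw [sq, ← transpose_apply M p l, hsymm]
  rw [← hdiag]
  nlinarith [hsq]

lemma frobSq_sub_mul_transpose (X : Matrix (Fin n) (Fin m) ℝ) (P : Matrix (Fin n) (Fin k) ℝ)
    {Q : Matrix (Fin m) (Fin k) ℝ} (hQ : Qᵀ * Q = 1) :
    frobSq (X - P * Qᵀ) = frobSq X - frobSq (X * Q) + frobSq (X * Q - P) := by
  have key : (X - P * Qᵀ) * (X - P * Qᵀ)ᵀ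
      = X * Xᵀ - (X * Q) * (X * Q)ᵀ + (X * Q - P) * (X * Q - P)ᵀ := by
    have hPQ : P * Qᵀ * (Q * Pᵀ) = P * Pᵀ := by
      rw [Matrix.mul_assoc, ← Matrix.mul_assoc Qᵀ, hQ, Matrix.one_mul]
    simp only [transpose_sub, transpose_mul, transpose_transpose, Matrix.sub_mul, Matrix.mul_sub]
    rw [hPQ, Matrix.mul_assoc P, Matrix.mul_assoc X Q, Matrix.mul_assoc X Q Pᵀ]
    abel
  rw [frobSq_eq_trace, key, trace_add, trace_sub, ← frobSq_eq_trace, ← frobSq_eq_trace,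
    ← frobSq_eq_trace]

lemma frobSq_mul_eq_sum_of_mul_eq_zero {S : Matrix (Fin n) (Fin m) ℝ}
    (hS : ∀ i l l', l ≠ l' → S i l * S i l' = 0) (W : Matrix (Fin m) (Fin k) ℝ) :
    frobSq (S * W) = ∑ l, (∑ i, S i l ^ 2) * ∑ j, W l j ^ 2 := by
  have hsq : ∀ i j, (S * W) i j ^ 2 = ∑ l, S i l ^ 2 * W l j ^ 2 := by
    intro i j
    rw [mul_apply, sq, Finset.sum_mul_sum]
    refine Finset.sum_congr rfl fun l _ => ?_
    rw [Finset.sum_eq_single l (fun l' _ hl' => by rw [mul_mul_mul_comm, hS i l l' hl'.symm,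
      zero_mul]) (by simp)]
    ring
  simp only [frobSq, hsq, Finset.sum_mul_sum]
  exact (Finset.sum_congr rfl fun _ _ => Finset.sum_comm).trans Finset.sum_comm

variable {σ : ℕ → ℝ}

lemma rectDiag_apply_mul_apply_of_ne (i : Fin n) {l l' : Fin m} (h : l ≠ l') :
    rectDiag n m σ i l * rectDiag n m σ i l' = 0 := by
  simp only [rectDiag, of_apply]
  split_ifs with hl hl' <;> first | exact absurd (Fin.ext (hl.symm.trans hl')) h | simp

lemma sum_sq_rectDiag_col (l : Fin m) :
    ∑ i : Fin n, rectDiag n m σ i l ^ 2 = if (l : ℕ) < n then σ l ^ 2 else 0 := by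
  simp [rectDiag, ite_pow, Fin.sum_univ_eq_sum_range (fun i => if i = (l : ℕ) then σ i ^ 2 else 0)]

lemma frobSq_rectDiag_mul_le (hσ : Antitone σ) (hσ0 : ∀ i, 0 ≤ σ i) (hkn : k ≤ n)
    {W : Matrix (Fin m) (Fin k) ℝ} (hW : Wᵀ * W = 1) :
    frobSq (rectDiag n m σ * W) ≤ ∑ i : Fin k, σ i ^ 2 := by
  set w : ℕ → ℝ := fun l => if l < n then σ l ^ 2 else 0 with hw_def
  have hw : Antitone w := by
    intro a b hab
    simp only [hw_def]
    split_ifs with hb ha ha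
    · exact pow_le_pow_left₀ (hσ0 b) (hσ hab) 2
    · omega
    · positivity
    · rfl
  rw [frobSq_mul_eq_sum_of_mul_eq_zero (fun i _ _ => rectDiag_apply_mul_apply_of_ne i) W]
  simp only [sum_sq_rectDiag_col]
  calc _ ≤ ∑ i ∈ Finset.range k, w i :=
        sum_mul_le_sum_range_of_antitone hw (by positivity) (fun _ => by positivity)
          (sum_sq_row_le_one hW) (frobSq_of_transpose_mul_self_eq_one hW).le
    _ = ∑ i : Fin k, σ i ^ 2 := by
        rw [← Fin.sum_univ_eq_sum_range]
        exact Finset.sum_congr rfl fun i _ => if_pos (by omega)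

lemma frobSq_svd_mul_le (hσ : Antitone σ) (hσ0 : ∀ i, 0 ≤ σ i) (hkn : k ≤ n)
    {U : Matrix (Fin n) (Fin n) ℝ} {V : Matrix (Fin m) (Fin m) ℝ} (hU : Uᵀ * U = 1)
    (hV : V * Vᵀ = 1) {Q : Matrix (Fin m) (Fin k) ℝ} (hQ : Qᵀ * Q = 1) :
    frobSq (U * rectDiag n m σ * Vᵀ * Q) ≤ ∑ i : Fin k, σ i ^ 2 := by
  have hVt : (Vᵀ)ᵀ * Vᵀ = 1 := by rwa [transpose_transpose]
  rw [Matrix.mul_assoc, Matrix.mul_assoc, frobSq_mul_left hU]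
  exact frobSq_rectDiag_mul_le hσ hσ0 hkn (transpose_mul_self_mul_eq_one hVt hQ)

lemma svd_mul_submatrix_castLE (hkn : k ≤ n) (hkm : k ≤ m) (U : Matrix (Fin n) (Fin n) ℝ)
    {V : Matrix (Fin m) (Fin m) ℝ} (hV : Vᵀ * V = 1) :
    U * rectDiag n m σ * Vᵀ * V.submatrix id (Fin.castLE hkm)
      = U.submatrix id (Fin.castLE hkn) * diagonal fun i : Fin k => σ i := by
  have hVQ : Vᵀ * V.submatrix id (Fin.castLE hkm)
      = (1 : Matrix (Fin m) (Fin m) ℝ).submatrix (Equiv.refl _) (Fin.castLE hkm) := by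
    rw [← hV, submatrix_mul _ _ _ id _ Function.bijective_id]
    rfl
  rw [Matrix.mul_assoc, Matrix.mul_assoc, hVQ, mul_submatrix_one (Equiv.refl _)]
  ext a i
  rw [mul_diagonal, mul_apply, Finset.sum_eq_single (Fin.castLE hkn i)]
  · simp [rectDiag]
  · intro b _ hb
    have hbi : (b : ℕ) ≠ i := fun h => hb (Fin.ext h)
    simp [rectDiag, hbi]
  · simp

end

theorem pca_type_factorisation_general {n m r k : ℕ} (hkn : k ≤ n) (hkm : k ≤ m)
    (A : Matrix (Fin n) (Fin m) ℝ)
    (U : Matrix (Fin n) (Fin n) ℝ) (V : Matrix (Fin m) (Fin m) ℝ)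
    (S : Matrix (Fin n) (Fin m) ℝ) (σ : ℕ → ℝ)
    (hU : Uᵀ * U = 1)
    (hV : Vᵀ * V = 1) (hV' : V * Vᵀ = 1)
    (hS : ∀ i j, S i j = if (i : ℕ) = (j : ℕ) then σ (i : ℕ) else 0)
    (hσzero : ∀ i, r ≤ i → σ i = 0)
    (hσsorted : ∀ i j, i ≤ j → σ j ≤ σ i)
    (hA : A = U * S * Vᵀ)
    (P : Matrix (Fin n) (Fin k) ℝ) (Q : Matrix (Fin m) (Fin k) ℝ)
    (hQ : Q = Matrix.of fun a i => V a (Fin.castLE hkm i))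
    (hP : P = Matrix.of fun a i => U a (Fin.castLE hkn i) * σ (i : ℕ)) :
    (∀ (P' : Matrix (Fin n) (Fin k) ℝ) (Q' : Matrix (Fin m) (Fin k) ℝ),
        Q'ᵀ * Q' = 1 → frobNorm (A - P * Qᵀ) ≤ frobNorm (A - P' * Q'ᵀ)) ∧
      P * Qᵀ = ∑ i : Fin k,
        σ (i : ℕ) • vecMulVec (fun a => U a (Fin.castLE hkn i)) (fun b => V b (Fin.castLE hkm i)) := by
  have hσ0 : ∀ i, 0 ≤ σ i := fun i =>
    hσzero (i + r) (Nat.le_add_left r i) ▸ hσsorted i (i + r) (Nat.le_add_right i r)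
  have hA' : A = U * rectDiag n m σ * Vᵀ := by rw [hA, show S = rectDiag n m σ from ext hS]
  have hPdiag : P = U.submatrix id (Fin.castLE hkn) * diagonal fun i : Fin k => σ i := by
    ext a i
    rw [hP, mul_diagonal]
    rfl
  have hAQ : A * Q = P := by rw [hA', hPdiag, hQ]; exact svd_mul_submatrix_castLE hkn hkm U hV
  have hQQ : Qᵀ * Q = 1 := hQ ▸ transpose_mul_self_submatrix_eq_one hV (Fin.castLE_injective hkm)
  refine ⟨fun P' Q' hQ' => Real.sqrt_le_sqrt ?_, ?_⟩
  · calc frobSq (A - P * Qᵀ) = frobSq A - ∑ i : Fin k, σ i ^ 2 := by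
          rw [frobSq_sub_mul_transpose A P hQQ, hAQ, sub_self, hPdiag,
            frobSq_mul_left (transpose_mul_self_submatrix_eq_one hU (Fin.castLE_injective hkn)),
            frobSq_diagonal]
          simp [frobSq]
      _ ≤ frobSq A - frobSq (A * Q') := by
          linarith [hA' ▸ frobSq_svd_mul_le hσsorted hσ0 hkn hU hV' hQ']
      _ ≤ frobSq (A - P' * Q'ᵀ) := by
          rw [frobSq_sub_mul_transpose A P' hQ']
          linarith [frobSq_nonneg (A * Q' - P')]
  · ext a b
    simp only [hP, hQ, mul_apply, transpose_apply, of_apply, Matrix.sum_apply, Matrix.smul_apply,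
      vecMulVec_apply, smul_eq_mul]
    exact Finset.sum_congr rfl fun _ _ => by ring

/-- **PCA-type factorisation**: minimising `‖A - PQᵀ‖` subject to `QᵀQ = Iₖ`
is achieved by `Q = V_{(1:k)}` (first `k` right singular vectors) and
`P = U_{(1:k)} diag(σ₁,…,σₖ)`, and then `PQᵀ = ∑_{i<k} σᵢ Uᵢ Vᵢᵀ`. -/
theorem pca_type_factorisation {n m r k : ℕ} (hkn : k ≤ n) (hkm : k ≤ m)
    (A : Matrix (Fin n) (Fin m) ℝ)
    (U : Matrix (Fin n) (Fin n) ℝ) (V : Matrix (Fin m) (Fin m) ℝ)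
    (S : Matrix (Fin n) (Fin m) ℝ) (σ : ℕ → ℝ)
    (hU : Uᵀ * U = 1) (hU' : U * Uᵀ = 1)
    (hV : Vᵀ * V = 1) (hV' : V * Vᵀ = 1)
    (hS : ∀ i j, S i j = if (i : ℕ) = (j : ℕ) then σ (i : ℕ) else 0)
    (hσpos : ∀ i, i < r → 0 < σ i)
    (hσzero : ∀ i, r ≤ i → σ i = 0)
    (hσsorted : ∀ i j, i ≤ j → σ j ≤ σ i)
    (hA : A = U * S * Vᵀ)
    (hrank : A.rank = r) (hk : k < r)
    (P : Matrix (Fin n) (Fin k) ℝ) (Q : Matrix (Fin m) (Fin k) ℝ)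
    (hQ : Q = Matrix.of fun a i => V a (Fin.castLE hkm i))
    (hP : P = Matrix.of fun a i => U a (Fin.castLE hkn i) * σ (i : ℕ)) :
    (∀ (P' : Matrix (Fin n) (Fin k) ℝ) (Q' : Matrix (Fin m) (Fin k) ℝ),
        Q'ᵀ * Q' = 1 → frobNorm (A - P * Qᵀ) ≤ frobNorm (A - P' * Q'ᵀ)) ∧
      P * Qᵀ = ∑ i : Fin k,
        σ (i : ℕ) • vecMulVec (fun a => U a (Fin.castLE hkn i)) (fun b => V b (Fin.castLE hkm i)) :=
  pca_type_factorisation_general hkn hkm A U V S σ hU hV hV' hS hσzero hσsorted hA P Q hQ hP
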